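/- arXiv:2503.12596 — 2 statements merged into one kernel-verified Lean document; each statement's English description precedes it below -/
import Mathlib

section
/- Let (x₁*, x₂*) with x₂* = 2σ/√3 (σ = ±1) be a folded equilibrium of the desingularized slow flow H, i.e., x₂* - (b+k)φ(x₂*) + kφ(x₁*) - c = 0 and φ'(x₁*) ≠ 0. Then the Jacobian DH(x₁*, x₂*) has trace 1 and determinant -k·φ''(x₂*)·(x₁* + x₂* - b(φ(x₁*) + φ(x₂*)) - 2c). Consequently at least one eigenvalue of DH(x₁*, x₂*) has positive real part. -/
noncomputable def φ : ℝ → ℝ := fun x => 4 * x - x ^ 3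

/-- First component of the desingularized slow flow. -/
noncomputable def H₁ (b c k : ℝ) (x₁ x₂ : ℝ) : ℝ :=
  (deriv φ x₂ / deriv φ x₁) * (x₁ - (b + k) * φ x₁ + k * φ x₂ - c)

/-- Second component of the desingularized slow flow. -/
noncomputable def H₂ (b c k : ℝ) (x₁ x₂ : ℝ) : ℝ :=
  x₂ - (b + k) * φ x₂ + k * φ x₁ - c

/-- Jacobian matrix of H at a point, via partial derivatives. -/
noncomputable def DH (b c k : ℝ) (x₁ x₂ : ℝ) : Matrix (Fin 2) (Fin 2) ℝ :=
  !![deriv (fun t => H₁ b c k t x₂) x₁, deriv (fun t => H₁ b c k x₁ t) x₂;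
     deriv (fun t => H₂ b c k t x₂) x₁, deriv (fun t => H₂ b c k x₁ t) x₂]

noncomputable def cspec (M : Matrix (Fin 2) (Fin 2) ℝ) : Set ℂ :=
  spectrum ℂ (M.map (algebraMap ℝ ℂ))

lemma derivφ (x : ℝ) : deriv φ x = 4 - 3 * x ^ 2 := by
  have h : HasDerivAt φ (4 - 3 * x ^ 2) x := by
    have := ((hasDerivAt_id x).const_mul 4).sub (hasDerivAt_pow 3 x)
    exact this.congr_deriv (by push_cast; ring)
  exact h.deriv

lemma deriv2φ (x : ℝ) : deriv (deriv φ) x = -6 * x := by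
  rw [funext derivφ]
  have h : HasDerivAt (fun x : ℝ => 4 - 3 * x ^ 2) (-6 * x) x := by
    have := ((hasDerivAt_pow 2 x).const_mul 3).const_sub 4
    exact this.congr_deriv (by push_cast; ring)
  exact h.deriv

/-- Any complex number μ with μ^2 = μ + d (d real) that we construct has positive real part
and lies in the spectrum of `!![0, p; q, 1]` when `p*q = d`. -/
lemma quad_root (d : ℝ) : ∃ μ : ℂ, μ ^ 2 - μ - (d : ℂ) = 0 ∧ μ.re > 0 := by
  by_cases h : (0:ℝ) ≤ 1 + 4 * d
  · refine ⟨(((1 + Real.sqrt (1 + 4 * d)) / 2 : ℝ) : ℂ), ?_, ?_⟩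
    · have hs : Real.sqrt (1 + 4 * d) ^ 2 = 1 + 4 * d := Real.sq_sqrt h
      push_cast
      have : ((Real.sqrt (1 + 4 * d) : ℂ)) ^ 2 = (1 : ℂ) + 4 * d := by
        exact_mod_cast congrArg (fun r : ℝ => (r : ℂ)) hs
      linear_combination this / 4
    · simp only [Complex.ofReal_re]
      positivity
  · push_neg at h
    refine ⟨(1/2 : ℂ) + Complex.I * (Real.sqrt (-(1 + 4 * d)) / 2 : ℝ), ?_, ?_⟩
    · have hs : Real.sqrt (-(1 + 4 * d)) ^ 2 = -(1 + 4 * d) := Real.sq_sqrt (by linarith)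
      have hsc : ((Real.sqrt (-(1 + 4 * d)) : ℂ)) ^ 2 = -((1 : ℂ) + 4 * d) := by
        exact_mod_cast congrArg (fun r : ℝ => (r : ℂ)) hs
      have hI : Complex.I ^ 2 = -1 := Complex.I_sq
      push_cast
      linear_combination (Complex.I ^ 2 / 4) * hsc + (-((1:ℂ) + 4 * (d:ℂ)) / 4) * hI
    · simp [Complex.add_re, Complex.mul_re]

theorem stmt_9 (b c k : ℝ) (hk : k ≠ 0) (σ : ℝ) (hσ : σ = 1 ∨ σ = -1)
    (x₁ x₂ : ℝ) (hx₂ : x₂ = 2 * σ / Real.sqrt 3)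
    (heq : x₂ - (b + k) * φ x₂ + k * φ x₁ - c = 0)
    (hx₁ : deriv φ x₁ ≠ 0) :
    (DH b c k x₁ x₂).trace = 1 ∧
    (DH b c k x₁ x₂).det =
      -k * deriv (deriv φ) x₂ * (x₁ + x₂ - b * (φ x₁ + φ x₂) - 2 * c) ∧
    ∃ μ ∈ cspec (DH b c k x₁ x₂), μ.re > 0 := by
  have h3 : Real.sqrt 3 ^ 2 = 3 := Real.sq_sqrt (by norm_num)
  have h3ne : Real.sqrt 3 ≠ 0 := by positivity
  have hσ2 : σ ^ 2 = 1 := by rcases hσ with h | h <;> simp [h]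
  have hx2sq : x₂ ^ 2 = 4 / 3 := by
    rw [hx₂, div_pow, mul_pow, hσ2, h3]; norm_num
  have hd2 : deriv φ x₂ = 0 := by rw [derivφ, hx2sq]; ring
  set D := deriv φ x₁ with hD
  set E := x₁ - (b + k) * φ x₁ + k * φ x₂ - c with hE
  -- entry (0,0)
  have e00 : deriv (fun t => H₁ b c k t x₂) x₁ = 0 := by
    have : (fun t => H₁ b c k t x₂) = fun _ => 0 := by
      funext t; simp [H₁, hd2]
    rw [this]; simp
  -- entry (0,1)
  have e01 : deriv (fun t => H₁ b c k x₁ t) x₂ = (-6 * x₂ / D) * E := by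
    have hre : (fun t => H₁ b c k x₁ t) =
        fun t => ((4 - 3 * t ^ 2) / D) * (x₁ - (b + k) * φ x₁ + k * (4 * t - t ^ 3) - c) := by
      funext t; simp [H₁, derivφ, φ, hD]
    rw [hre]
    have h1 : HasDerivAt (fun t : ℝ => (4 - 3 * t ^ 2) / D) (-6 * x₂ / D) x₂ := by
      apply HasDerivAt.div_const
      have := ((hasDerivAt_pow 2 x₂).const_mul 3).const_sub 4
      exact this.congr_deriv (by push_cast; ring)
    have h2 : HasDerivAt (fun t : ℝ => x₁ - (b + k) * φ x₁ + k * (4 * t - t ^ 3) - c)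
        (k * (4 - 3 * x₂ ^ 2)) x₂ := by
      apply HasDerivAt.sub_const
      apply HasDerivAt.const_add
      apply HasDerivAt.const_mul
      have := ((hasDerivAt_id x₂).const_mul 4).sub (hasDerivAt_pow 3 x₂)
      exact this.congr_deriv (by push_cast; ring)
    erw [(h1.mul h2).deriv]
    have h0 : (4 - 3 * x₂ ^ 2) = 0 := by rw [hx2sq]; ring
    rw [h0]
    simp [φ, hE]
  -- entry (1,0)
  have e10 : deriv (fun t => H₂ b c k t x₂) x₁ = k * D := by
    have hre : (fun t => H₂ b c k t x₂) =
        fun t => x₂ - (b + k) * φ x₂ + k * (4 * t - t ^ 3) - c := by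
      funext t; simp [H₂, φ]
    rw [hre]
    have h2 : HasDerivAt (fun t : ℝ => x₂ - (b + k) * φ x₂ + k * (4 * t - t ^ 3) - c)
        (k * (4 - 3 * x₁ ^ 2)) x₁ := by
      apply HasDerivAt.sub_const
      apply HasDerivAt.const_add
      apply HasDerivAt.const_mul
      have := ((hasDerivAt_id x₁).const_mul 4).sub (hasDerivAt_pow 3 x₁)
      exact this.congr_deriv (by push_cast; ring)
    rw [h2.deriv, hD, derivφ]
  -- entry (1,1)
  have e11 : deriv (fun t => H₂ b c k x₁ t) x₂ = 1 := by
    have hre : (fun t => H₂ b c k x₁ t) =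
        fun t => t - (b + k) * (4 * t - t ^ 3) + k * φ x₁ - c := by
      funext t; simp [H₂, φ]
    rw [hre]
    have h2 : HasDerivAt (fun t : ℝ => t - (b + k) * (4 * t - t ^ 3) + k * φ x₁ - c)
        (1 - (b + k) * (4 - 3 * x₂ ^ 2)) x₂ := by
      apply HasDerivAt.sub_const
      apply HasDerivAt.add_const
      apply HasDerivAt.sub
      · exact hasDerivAt_id x₂
      · apply HasDerivAt.const_mul
        have := ((hasDerivAt_id x₂).const_mul 4).sub (hasDerivAt_pow 3 x₂)
        exact this.congr_deriv (by push_cast; ring)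
    rw [h2.deriv, hx2sq]; ring
  have hDH : DH b c k x₁ x₂ = !![0, (-6 * x₂ / D) * E; k * D, 1] := by
    rw [DH, e00, e01, e10, e11]
  have hPQ : (-6 * x₂ / D) * E * (k * D) = -6 * x₂ * E * k := by
    field_simp
  refine ⟨?_, ?_, ?_⟩
  · rw [hDH, Matrix.trace_fin_two_of]; ring
  · rw [hDH, Matrix.det_fin_two_of, deriv2φ]
    rw [zero_mul, zero_sub, hPQ, hE]
    linear_combination (-6 * x₂ * k) * heq
  · obtain ⟨μ, hquad, hre⟩ := quad_root ((-6 * x₂ / D) * E * (k * D))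
    refine ⟨μ, ?_, hre⟩
    rw [cspec, hDH, spectrum.mem_iff]
    intro hu
    have hmat : algebraMap ℂ (Matrix (Fin 2) (Fin 2) ℂ) μ -
        (!![0, (-6 * x₂ / D) * E; k * D, 1] : Matrix (Fin 2) (Fin 2) ℝ).map (algebraMap ℝ ℂ) =
        !![μ, -(((-6 * x₂ / D) * E : ℝ) : ℂ); -(((k * D : ℝ)) : ℂ), μ - 1] := by
      ext i j
      fin_cases i <;> fin_cases j <;>
        simp [Matrix.algebraMap_matrix_apply, Matrix.map_apply]
    rw [hmat, Matrix.isUnit_iff_isUnit_det, Matrix.det_fin_two_of] at hu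
    have hdet : μ * (μ - 1) - -(((-6 * x₂ / D) * E : ℝ) : ℂ) * -(((k * D : ℝ)) : ℂ) = 0 := by
      push_cast
      push_cast at hquad
      linear_combination hquad
    rw [hdet] at hu
    exact hu.ne_zero rfl
end

section
/- Let x* = 2σ/√3 with σ = ±1 and let X = (x*, x*). The Jacobian at X of the doubly-desingularized slow flow F(x₁,x₂) = (φ'(x₂)(x₁-(b+k)φ(x₁)+kφ(x₂)-c), φ'(x₁)(x₂-(b+k)φ(x₂)+kφ(x₁)-c)) is the symmetric matrix [[0, λ₁],[λ₁, 0]] with λ₁ = φ''(x*)(x* - bφ(x*) - c). Its eigenvalues are ±λ₁, with eigenvectors (1,1) and (1,-1) respectively, and det DF(X) = -λ₁² ≤ 0. In particular, if c ≠ x* - bφ(x*) then X is a saddle of the linearization. -/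
lemma hphi (x : ℝ) : HasDerivAt φ (4 - 3 * x ^ 2) x := by
  have := ((hasDerivAt_id x).const_mul 4).sub (hasDerivAt_pow 3 x)
  exact this.congr_deriv (by push_cast; ring)

lemma dphi : deriv φ = fun x => 4 - 3 * x ^ 2 := funext fun x => (hphi x).deriv

lemma ddphi : deriv (deriv φ) = fun x => -6 * x := by
  rw [dphi]; ext x
  have : HasDerivAt (fun x : ℝ => 4 - 3 * x ^ 2) (-6 * x) x := by
    have := (((hasDerivAt_pow 2 x).const_mul 3).const_sub 4)
    exact this.congr_deriv (by push_cast; ring)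
  exact this.deriv


/-- Components of the doubly-desingularized slow flow. -/
noncomputable def F₁ (b c k : ℝ) (x₁ x₂ : ℝ) : ℝ :=
  deriv φ x₂ * (x₁ - (b + k) * φ x₁ + k * φ x₂ - c)

noncomputable def F₂ (b c k : ℝ) (x₁ x₂ : ℝ) : ℝ :=
  deriv φ x₁ * (x₂ - (b + k) * φ x₂ + k * φ x₁ - c)

lemma dF₁_1 (b c k x₁ x₂ : ℝ) :
    deriv (fun t => F₁ b c k t x₂) x₁
      = (4 - 3 * x₂ ^ 2) * (1 - (b + k) * (4 - 3 * x₁ ^ 2)) := by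
  have h1 := (((hasDerivAt_id x₁).sub ((hphi x₁).const_mul (b + k))).add_const
    (k * φ x₂)).sub_const c
  have e : (fun t => F₁ b c k t x₂)
      = fun t => (4 - 3 * x₂ ^ 2) * (t - (b + k) * φ t + k * φ x₂ - c) := by
    ext t; simp only [F₁, dphi]
  rw [e]
  simpa using (h1.const_mul (4 - 3 * x₂ ^ 2)).deriv

lemma dF₁_2 (b c k x₁ x₂ : ℝ) :
    deriv (fun t => F₁ b c k x₁ t) x₂
      = (-6 * x₂) * (x₁ - (b + k) * φ x₁ + k * φ x₂ - c)
        + (4 - 3 * x₂ ^ 2) * (k * (4 - 3 * x₂ ^ 2)) := by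
  have hg : HasDerivAt (fun t : ℝ => 4 - 3 * t ^ 2) (-6 * x₂) x₂ := by
    have := (((hasDerivAt_pow 2 x₂).const_mul 3).const_sub 4)
    exact this.congr_deriv (by push_cast; ring)
  have hh : HasDerivAt (fun t => x₁ - (b + k) * φ x₁ + k * φ t - c)
      (k * (4 - 3 * x₂ ^ 2)) x₂ := by
    have := (((hphi x₂).const_mul k).const_add (x₁ - (b + k) * φ x₁)).sub_const c
    exact this
  have h := hg.mul hh
  have : (fun t => F₁ b c k x₁ t) = fun t => (4 - 3 * t ^ 2) * (x₁ - (b + k) * φ x₁ + k * φ t - c) := by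
    ext t; simp only [F₁, dphi]
  rw [this]; exact h.deriv

lemma dF₂_1 (b c k x₁ x₂ : ℝ) :
    deriv (fun t => F₂ b c k t x₂) x₁
      = (-6 * x₁) * (x₂ - (b + k) * φ x₂ + k * φ x₁ - c)
        + (4 - 3 * x₁ ^ 2) * (k * (4 - 3 * x₁ ^ 2)) := by
  have : (fun t => F₂ b c k t x₂) = fun t => F₁ b c k x₂ t := by
    ext t; simp only [F₁, F₂]
  rw [this, dF₁_2]

lemma dF₂_2 (b c k x₁ x₂ : ℝ) :
    deriv (fun t => F₂ b c k x₁ t) x₂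
      = (4 - 3 * x₁ ^ 2) * (1 - (b + k) * (4 - 3 * x₂ ^ 2)) := by
  have : (fun t => F₂ b c k x₁ t) = fun t => F₁ b c k t x₁ := by
    ext t; simp only [F₁, F₂]
  rw [this, dF₁_1]

/-- Jacobian matrix of F via partial derivatives. -/
noncomputable def DF (b c k : ℝ) (x₁ x₂ : ℝ) : Matrix (Fin 2) (Fin 2) ℝ :=
  !![deriv (fun t => F₁ b c k t x₂) x₁, deriv (fun t => F₁ b c k x₁ t) x₂;
     deriv (fun t => F₂ b c k t x₂) x₁, deriv (fun t => F₂ b c k x₁ t) x₂]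

theorem stmt_13 (b c k : ℝ) (hk : k ≠ 0) (σ : ℝ) (hσ : σ = 1 ∨ σ = -1)
    (x : ℝ) (hx : x = 2 * σ / Real.sqrt 3) :
    let lam : ℝ := deriv (deriv φ) x * (x - b * φ x - c)
    DF b c k x x = !![0, lam; lam, 0] ∧
    (DF b c k x x).mulVec ![1, 1] = lam • ![1, 1] ∧
    (DF b c k x x).mulVec ![1, -1] = (-lam) • ![1, -1] ∧
    (DF b c k x x).det = -lam ^ 2 ∧ (DF b c k x x).det ≤ 0 ∧
    (c ≠ x - b * φ x → (DF b c k x x).det < 0) := by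
  intro lam
  have h3 : Real.sqrt 3 ^ 2 = 3 := Real.sq_sqrt (by norm_num)
  have h3' : Real.sqrt 3 ≠ 0 := by positivity
  have hx2 : x ^ 2 = 4 / 3 := by
    have hσ2 : σ ^ 2 = 1 := by rcases hσ with h | h <;> simp [h]
    rw [hx, div_pow, h3]
    rw [mul_pow, hσ2]; norm_num
  have hz : (4 : ℝ) - 3 * x ^ 2 = 0 := by rw [hx2]; ring
  have hxne : x ≠ 0 := by
    rcases hσ with h | h <;> rw [hx, h] <;>
      simp [div_eq_zero_iff, h3']
  have hlam : lam = -6 * x * (x - b * φ x - c) := by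
    simp only [lam, ddphi]
  have hDF : DF b c k x x = !![0, lam; lam, 0] := by
    rw [DF, dF₁_1, dF₁_2, dF₂_1, dF₂_2, hz, hlam]
    congr 1 <;> ring_nf <;> simp [φ] <;> ring
  refine ⟨hDF, ?_, ?_, ?_, ?_, ?_⟩
  · rw [hDF]; funext i; fin_cases i <;>
      simp [Matrix.mulVec, dotProduct]
  · rw [hDF]; funext i; fin_cases i <;>
      simp [Matrix.mulVec, dotProduct] <;> ring
  · rw [hDF]; simp [Matrix.det_fin_two]; ring
  · rw [hDF]; simp [Matrix.det_fin_two]; nlinarith [sq_nonneg lam]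
  · intro hc
    have hd : x - b * φ x - c ≠ 0 := by intro h; apply hc; linarith
    have hne : lam ≠ 0 := by
      rw [hlam]; exact mul_ne_zero (mul_ne_zero (by norm_num) hxne) hd
    rw [hDF]; simp [Matrix.det_fin_two]
    nlinarith [mul_self_pos.2 hne]
end
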